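/- Under the hypotheses of the majorization principle — X a real Banach space, x₀ ∈ X, R > 0, A satisfying the variable Lipschitz condition on B[x₀,R] with continuous nonnegative k, a = ‖A x₀ − x₀‖, a₊(r) = a + ∫₀^r k(t) dt having smallest fixed point r* in [0,R] — let r_n be defined by r₀ = 0, r_{n+1} = a₊(r_n). Let ξ₀ ∈ B[x₀,R] with ρ₀ = ‖ξ₀ − x₀‖ and assume either ρ₀ ≤ r* or a₊(s) < s for all s with r* < s ≤ ρ₀; set ρ_{n+1} = a₊(ρ_n) and ξ_{n+1} = A ξ_n. Then for all n the estimate ‖ξ_{n+1} − ξ_n‖ ≤ ρ_{n+1} + ρ_n − 2 r_n holds. -/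

import Mathlib

/-!
Write `xₙ = Aⁿ x₀`. The key estimate is that `‖x - x₀‖ ≤ s` and `‖y - x‖ ≤ t - s` imply
`‖A y - A x‖ ≤ a₊(t) - a₊(s) = ∫ₛᵗ k`: parametrise the segment from `x` to `y` by `τ ∈ [s, t]`
so that the point at time `τ` lies in `B[x₀, τ]`, where `A` is `k(τ)`-Lipschitz; the right
upper Dini derivative of `τ ↦ ‖A(γ τ) - A x‖` is then at most `k(τ)`, and comparison with the
primitive of `k` gives the integral bound. By induction, `‖xₙ - x₀‖ ≤ rₙ` and
`‖ξₙ - xₙ‖ ≤ ρₙ - rₙ`, as long as `ρₙ ≤ R`; the admissibility condition makes `[0, max(r*, ρ₀)]`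
invariant under `a₊`, which keeps `ρₙ ≤ R`. The triangle inequality through `xₙ₊₁` and `xₙ` then
gives the estimate.
-/

open Set Filter Topology intervalIntegral

theorem norm_sub_le_integral_of_norm_sub_le_mul {E : Type*} [NormedAddCommGroup E]
    {F : ℝ → E} {g : ℝ → ℝ} {a b : ℝ} (hab : a ≤ b) (hF : ContinuousOn F (Icc a b))
    (hg : ContinuousOn g (Icc a b))
    (hFg : ∀ x ∈ Ico a b, ∀ z ∈ Ioc x b, ‖F z - F x‖ ≤ g z * (z - x)) :
    ‖F b - F a‖ ≤ ∫ t in a..b, g t := by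
  have hIcc : ∀ x ∈ Ico a b, Icc a b ∈ 𝓝[>] x := fun x hx => Icc_mem_nhdsGT_of_mem hx
  have hg_right : ∀ x ∈ Ico a b, ContinuousWithinAt g (Ioi x) x := fun x hx =>
    (hg x (Ico_subset_Icc_self hx)).mono_of_mem_nhdsWithin (hIcc x hx)
  refine image_le_of_liminf_slope_right_le_deriv_boundary (f := fun t => ‖F t - F a‖)
    (B := fun t => ∫ s in a..t, g s) (B' := g) (hF.sub continuousOn_const).norm (by simp) ?_ ?_ ?_
    ⟨hab, le_rfl⟩
  · simpa [uIcc_of_le hab] using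
      continuousOn_primitive_interval (hg.integrableOn_Icc.mono_set (uIcc_of_le hab).subset)
  · intro x hx
    exact integral_hasDerivWithinAt_right
      ((hg.mono (Icc_subset_Icc_right hx.2.le)).intervalIntegrable_of_Icc hx.1)
      ((hg.stronglyMeasurableAtFilter_nhdsWithin measurableSet_Icc x).filter_mono
        (nhdsWithin_le_of_mem (hIcc x hx))) (hg_right x hx)
  · intro x hx r hr
    have hev : ∀ᶠ z in 𝓝[>] x, z ∈ Icc a b ∧ x < z ∧ g z < r :=
      Filter.Eventually.and (hIcc x hx) <|
        Filter.Eventually.and self_mem_nhdsWithin ((hg_right x hx).eventually (gt_mem_nhds hr))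
    refine hev.frequently.mono fun z ⟨hz, hxz, hgz⟩ => ?_
    rw [slope_def_field, div_lt_iff₀ (sub_pos.2 hxz)]
    calc ‖F z - F a‖ - ‖F x - F a‖ ≤ ‖F z - F x‖ := by
          simpa using norm_sub_norm_le (F z - F a) (F x - F a)
      _ ≤ g z * (z - x) := hFg x hx z ⟨hxz, hz.2⟩
      _ < r * (z - x) := by gcongr

section VariableLipschitz

variable {X Y : Type*} [NormedAddCommGroup X] [NormedAddCommGroup Y]

def VariableLipschitzOn (A : X → Y) (x₀ : X) (R : ℝ) (k : ℝ → ℝ) : Prop :=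
  ∀ x₁ x₂ : X, ∀ r : ℝ, ‖x₁ - x₀‖ ≤ r → ‖x₂ - x₀‖ ≤ r → 0 < r → r ≤ R →
    ‖A x₁ - A x₂‖ ≤ k r * ‖x₁ - x₂‖

variable {A : X → Y} {x₀ : X} {R : ℝ} {k : ℝ → ℝ}

theorem VariableLipschitzOn.mono (hA : VariableLipschitzOn A x₀ R k) {R' : ℝ} (hR : R' ≤ R) :
    VariableLipschitzOn A x₀ R' k :=
  fun x₁ x₂ r h₁ h₂ hr hrR => hA x₁ x₂ r h₁ h₂ hr (hrR.trans hR)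

theorem VariableLipschitzOn.continuousOn (hA : VariableLipschitzOn A x₀ R k) (hR : 0 < R) :
    ContinuousOn A (Metric.closedBall x₀ R) := by
  refine (LipschitzOnWith.of_dist_le_mul (K := (k R).toNNReal) fun x hx y hy => ?_).continuousOn
  rw [dist_eq_norm, dist_eq_norm]
  calc ‖A x - A y‖ ≤ k R * ‖x - y‖ :=
        hA x y R (mem_closedBall_iff_norm.1 hx) (mem_closedBall_iff_norm.1 hy) hR le_rfl
    _ ≤ (k R).toNNReal * ‖x - y‖ := by gcongr; exact Real.le_coe_toNNReal _

theorem VariableLipschitzOn.norm_sub_le_integral [NormedSpace ℝ X] {p q : ℝ}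
    (hA : VariableLipschitzOn A x₀ q k) (hk : ContinuousOn k (Icc p q))
    (hk₀ : ∀ t ∈ Icc p q, 0 ≤ k t) (hp : 0 ≤ p) {u v : X} (hu : ‖u - x₀‖ ≤ p)
    (huv : ‖v - u‖ ≤ q - p) : ‖A v - A u‖ ≤ ∫ t in p..q, k t := by
  rcases (sub_nonneg.1 ((norm_nonneg _).trans huv)).eq_or_lt with rfl | hpq
  · simp [sub_eq_zero.1 (norm_le_zero_iff.1 (by simpa using huv))]
  set γ : ℝ → X := fun t => u + ((t - p) / (q - p)) • (v - u)
  have hγ : ∀ x z, x ≤ z → ‖γ z - γ x‖ ≤ z - x := by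
    intro x z hxz
    have : γ z - γ x = ((z - x) / (q - p)) • (v - u) := by
      simp only [γ, add_sub_add_left_eq_sub, ← sub_smul, sub_div, sub_sub_sub_cancel_right]
    rw [this, norm_smul, Real.norm_of_nonneg (div_nonneg (sub_nonneg.2 hxz) (sub_pos.2 hpq).le),
      div_mul_eq_mul_div, div_le_iff₀ (sub_pos.2 hpq)]
    exact mul_le_mul_of_nonneg_left huv (sub_nonneg.2 hxz)
  have hγp : γ p = u := by simp [γ]
  have hγq : γ q = v := by simp [γ, div_self (sub_pos.2 hpq).ne']
  have hγx₀ : ∀ t, p ≤ t → ‖γ t - x₀‖ ≤ t := fun t ht =>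
    calc ‖γ t - x₀‖ ≤ ‖γ t - γ p‖ + ‖γ p - x₀‖ := norm_sub_le_norm_sub_add_norm_sub _ _ _
      _ ≤ (t - p) + p := add_le_add (hγ p t ht) (hγp ▸ hu)
      _ = t := sub_add_cancel t p
  have hF : ContinuousOn (A ∘ γ) (Icc p q) :=
    (hA.continuousOn (hp.trans_lt hpq)).comp (by fun_prop) fun t ht =>
      mem_closedBall_iff_norm.2 ((hγx₀ t ht.1).trans ht.2)
  have := norm_sub_le_integral_of_norm_sub_le_mul hpq.le hF hk fun x hx z hz =>
    calc ‖A (γ z) - A (γ x)‖ ≤ k z * ‖γ z - γ x‖ :=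
          hA _ _ z (hγx₀ z (hx.1.trans hz.1.le)) ((hγx₀ x hx.1).trans hz.1.le)
            (hp.trans_lt (hx.1.trans_lt hz.1)) hz.2
      _ ≤ k z * (z - x) :=
          mul_le_mul_of_nonneg_left (hγ x z hz.1.le) (hk₀ z ⟨hx.1.trans hz.1.le, hz.2⟩)
  simpa [hγp, hγq] using this

end VariableLipschitz

section Majorant

variable {k : ℝ → ℝ} {R a : ℝ} {aplus : ℝ → ℝ}

theorem majorant_sub_majorant (hk : ContinuousOn k (Icc 0 R))
    (haplus : ∀ r, aplus r = a + ∫ t in (0 : ℝ)..r, k t) {s t : ℝ} (hs : s ∈ Icc 0 R)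
    (ht : t ∈ Icc 0 R) : aplus t - aplus s = ∫ u in s..t, k u := by
  have h0 : (0 : ℝ) ∈ Icc 0 R := left_mem_Icc.2 (hs.1.trans hs.2)
  rw [haplus, haplus, add_sub_add_left_eq_sub, integral_interval_sub_left]
  · exact (hk.mono (uIcc_subset_Icc h0 ht)).intervalIntegrable
  · exact (hk.mono (uIcc_subset_Icc h0 hs)).intervalIntegrable

theorem monotoneOn_majorant (hk : ContinuousOn k (Icc 0 R)) (hk₀ : ∀ t ∈ Icc 0 R, 0 ≤ k t)
    (haplus : ∀ r, aplus r = a + ∫ t in (0 : ℝ)..r, k t) : MonotoneOn aplus (Icc 0 R) := by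
  intro s hs t ht hst
  rw [← sub_nonneg, majorant_sub_majorant hk haplus hs ht]
  exact integral_nonneg hst fun u hu => hk₀ u ⟨hs.1.trans hu.1, hu.2.trans ht.2⟩

end Majorant

section Orbits

variable {f : ℝ → ℝ} {R c : ℝ} {r ρ : ℕ → ℝ}

theorem orbit_mem_Icc_of_fixedPoint (hf : MonotoneOn f (Icc 0 R)) (hc : c ∈ Icc 0 R)
    (hfc : f c = c) (hf₀ : 0 ≤ f 0) (hr₀ : r 0 = 0) (hr : ∀ n, r (n + 1) = f (r n)) (n : ℕ) :
    r n ∈ Icc 0 c := by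
  induction n with
  | zero => rw [hr₀]; exact left_mem_Icc.2 hc.1
  | succ n ih =>
    have hrn : r n ∈ Icc 0 R := ⟨ih.1, ih.2.trans hc.2⟩
    rw [hr]
    exact ⟨hf₀.trans (hf (left_mem_Icc.2 (hc.1.trans hc.2)) hrn ih.1),
      hfc ▸ hf hrn hc ih.2⟩

theorem orbit_mem_Icc_of_admissible (hf : MonotoneOn f (Icc 0 R)) (hc : c ∈ Icc 0 R)
    (hfc : f c = c) (hρR : ρ 0 ≤ R) (hadm : ρ 0 ≤ c ∨ ∀ s, c < s → s ≤ ρ 0 → f s < s)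
    (hr₀ : r 0 = 0) (hr : ∀ n, r (n + 1) = f (r n)) (hr_nonneg : ∀ n, 0 ≤ r n)
    (hρ₀ : 0 ≤ ρ 0) (hρ : ∀ n, ρ (n + 1) = f (ρ n)) (n : ℕ) :
    ρ n ∈ Icc (r n) (max c (ρ 0)) := by
  have hMR : max c (ρ 0) ≤ R := max_le hc.2 hρR
  have hmaps : ∀ s ∈ Icc 0 (max c (ρ 0)), f s ≤ max c (ρ 0) := by
    intro s hs
    rcases le_or_gt s c with hsc | hcs
    · exact (hfc ▸ hf ⟨hs.1, hs.2.trans hMR⟩ hc hsc).trans (le_max_left _ _)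
    · have hsρ : s ≤ ρ 0 := (le_max_iff.1 hs.2).resolve_left hcs.not_ge
      rcases hadm with hρc | hadm
      · exact absurd (hsρ.trans hρc) hcs.not_ge
      · exact (hadm s hcs hsρ).le.trans (hsρ.trans (le_max_right _ _))
  induction n with
  | zero => exact ⟨hr₀ ▸ hρ₀, le_max_right _ _⟩
  | succ n ih =>
    have hρn : ρ n ∈ Icc 0 (max c (ρ 0)) := ⟨(hr_nonneg n).trans ih.1, ih.2⟩
    rw [hr, hρ]
    exact ⟨hf ⟨hr_nonneg n, ih.1.trans (ih.2.trans hMR)⟩ ⟨hρn.1, hρn.2.trans hMR⟩ ih.1,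
      hmaps _ hρn⟩

end Orbits

section Majorization

variable {X : Type*} [NormedAddCommGroup X] [NormedSpace ℝ X] {A : X → X} {x₀ : X} {R a : ℝ}
  {k aplus : ℝ → ℝ} {r : ℕ → ℝ}

theorem VariableLipschitzOn.norm_sub_le_majorant_sub (hA : VariableLipschitzOn A x₀ R k)
    (hk : ContinuousOn k (Icc 0 R)) (hk₀ : ∀ t ∈ Icc 0 R, 0 ≤ k t)
    (haplus : ∀ r, aplus r = a + ∫ t in (0 : ℝ)..r, k t) {s t : ℝ} (hs : 0 ≤ s) (ht : t ≤ R)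
    {x y : X} (hx : ‖x - x₀‖ ≤ s) (hxy : ‖y - x‖ ≤ t - s) : ‖A y - A x‖ ≤ aplus t - aplus s := by
  have hst : s ≤ t := sub_nonneg.1 ((norm_nonneg _).trans hxy)
  rw [majorant_sub_majorant hk haplus ⟨hs, hst.trans ht⟩ ⟨hs.trans hst, ht⟩]
  exact (hA.mono ht).norm_sub_le_integral (hk.mono (Icc_subset_Icc hs ht))
    (fun u hu => hk₀ u ⟨hs.trans hu.1, hu.2.trans ht⟩) hs hx hxy

theorem VariableLipschitzOn.norm_iterate_sub_le (hA : VariableLipschitzOn A x₀ R k)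
    (hk : ContinuousOn k (Icc 0 R)) (hk₀ : ∀ t ∈ Icc 0 R, 0 ≤ k t)
    (haplus : ∀ r, aplus r = ‖A x₀ - x₀‖ + ∫ t in (0 : ℝ)..r, k t) (hr₀ : r 0 = 0)
    (hr : ∀ n, r (n + 1) = aplus (r n)) (hrR : ∀ n, r n ∈ Icc 0 R) (n : ℕ) :
    ‖A^[n] x₀ - x₀‖ ≤ r n := by
  induction n with
  | zero => simp [hr₀]
  | succ n ih =>
    rw [Function.iterate_succ_apply', hr]
    calc ‖A (A^[n] x₀) - x₀‖ ≤ ‖A (A^[n] x₀) - A x₀‖ + ‖A x₀ - x₀‖ :=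
          norm_sub_le_norm_sub_add_norm_sub _ _ _
      _ ≤ (aplus (r n) - aplus 0) + ‖A x₀ - x₀‖ := by
          gcongr
          exact hA.norm_sub_le_majorant_sub hk hk₀ haplus le_rfl (hrR n).2 (by simp)
            (by simpa using ih)
      _ = aplus (r n) := by simp [haplus 0]

theorem VariableLipschitzOn.norm_sub_iterate_le (hA : VariableLipschitzOn A x₀ R k)
    (hk : ContinuousOn k (Icc 0 R)) (hk₀ : ∀ t ∈ Icc 0 R, 0 ≤ k t)
    (haplus : ∀ r, aplus r = ‖A x₀ - x₀‖ + ∫ t in (0 : ℝ)..r, k t) (hr₀ : r 0 = 0)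
    (hr : ∀ n, r (n + 1) = aplus (r n)) (hrR : ∀ n, r n ∈ Icc 0 R) {ξ : ℕ → X} {ρ : ℕ → ℝ}
    (hξ : ∀ n, ξ (n + 1) = A (ξ n)) (hρ₀ : ‖ξ 0 - x₀‖ ≤ ρ 0)
    (hρ : ∀ n, ρ (n + 1) = aplus (ρ n)) (hρR : ∀ n, ρ n ≤ R) (n : ℕ) :
    ‖ξ n - A^[n] x₀‖ ≤ ρ n - r n := by
  induction n with
  | zero => simpa [hr₀] using hρ₀
  | succ n ih =>
    rw [hξ, Function.iterate_succ_apply', hρ, hr]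
    exact hA.norm_sub_le_majorant_sub hk hk₀ haplus (hrR n).1 (hρR n)
      (hA.norm_iterate_sub_le hk hk₀ haplus hr₀ hr hrR n) ih

end Majorization

theorem successive_approximations_consecutive_estimate_general
    {X : Type*} [NormedAddCommGroup X] [NormedSpace ℝ X]
    (x₀ : X) (R : ℝ) (A : X → X) (k : ℝ → ℝ)
    (hk_cont : ContinuousOn k (Set.Icc 0 R))
    (hk_nonneg : ∀ t ∈ Set.Icc (0 : ℝ) R, 0 ≤ k t)
    (hLip : ∀ x₁ x₂ : X, ∀ r : ℝ, ‖x₁ - x₀‖ ≤ r → ‖x₂ - x₀‖ ≤ r →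
      0 < r → r ≤ R → ‖A x₁ - A x₂‖ ≤ k r * ‖x₁ - x₂‖)
    (a : ℝ) (ha : a = ‖A x₀ - x₀‖)
    (aplus : ℝ → ℝ) (haplus : ∀ r : ℝ, aplus r = a + ∫ t in (0 : ℝ)..r, k t)
    (rstar : ℝ) (hrstar_mem : rstar ∈ Set.Icc (0 : ℝ) R)
    (hrstar_fix : aplus rstar = rstar)
    (r : ℕ → ℝ) (hr0 : r 0 = 0) (hr_succ : ∀ n : ℕ, r (n + 1) = aplus (r n))
    (ξ : ℕ → X) (hξ0 : ‖ξ 0 - x₀‖ ≤ R) (hξ_succ : ∀ n : ℕ, ξ (n + 1) = A (ξ n))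
    (ρ : ℕ → ℝ) (hρ0 : ρ 0 = ‖ξ 0 - x₀‖) (hρ_succ : ∀ n : ℕ, ρ (n + 1) = aplus (ρ n))
    (hadm : ρ 0 ≤ rstar ∨ ∀ s : ℝ, rstar < s → s ≤ ρ 0 → aplus s < s) :
    ∀ n : ℕ, ‖ξ (n + 1) - ξ n‖ ≤ ρ (n + 1) + ρ n - 2 * r n := by
  subst ha
  have hA : VariableLipschitzOn A x₀ R k := hLip
  have hmono := monotoneOn_majorant hk_cont hk_nonneg haplus
  have hr : ∀ n, r n ∈ Icc 0 rstar := orbit_mem_Icc_of_fixedPoint hmono hrstar_mem hrstar_fix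
    (by simp [haplus]) hr0 hr_succ
  have hrR : ∀ n, r n ∈ Icc 0 R := fun n => ⟨(hr n).1, (hr n).2.trans hrstar_mem.2⟩
  have hρR : ∀ n, ρ n ≤ R := fun n =>
    (orbit_mem_Icc_of_admissible hmono hrstar_mem hrstar_fix (hρ0 ▸ hξ0) hadm hr0 hr_succ
      (fun n => (hr n).1) (hρ0 ▸ norm_nonneg _) hρ_succ n).2.trans
      (max_le hrstar_mem.2 (hρ0 ▸ hξ0))
  -- The orbit of `x₀` itself, started at `A x₀`, is majorized by the shifted sequence `r (n + 1)`.
  have horbit_step (n : ℕ) : ‖A^[n + 1] x₀ - A^[n] x₀‖ ≤ r (n + 1) - r n :=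
    hA.norm_sub_iterate_le hk_cont hk_nonneg haplus hr0 hr_succ hrR
      (ξ := fun n => A^[n + 1] x₀) (fun n => Function.iterate_succ_apply' A (n + 1) x₀)
      (by simp [hr_succ, hr0, haplus]) (fun n => hr_succ (n + 1)) (fun n => (hrR (n + 1)).2) n
  have hξ := hA.norm_sub_iterate_le hk_cont hk_nonneg haplus hr0 hr_succ hrR hξ_succ hρ0.ge
    hρ_succ hρR
  intro n
  calc ‖ξ (n + 1) - ξ n‖
      ≤ ‖ξ (n + 1) - A^[n + 1] x₀‖ + ‖A^[n + 1] x₀ - A^[n] x₀‖ + ‖A^[n] x₀ - ξ n‖ := by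
        simpa only [dist_eq_norm] using
          dist_triangle4 (ξ (n + 1)) (A^[n + 1] x₀) (A^[n] x₀) (ξ n)
    _ ≤ (ρ (n + 1) - r (n + 1)) + (r (n + 1) - r n) + (ρ n - r n) := by
        rw [norm_sub_rev (A^[n] x₀)]
        gcongr
        exacts [hξ (n + 1), horbit_step n, hξ n]
    _ = ρ (n + 1) + ρ n - 2 * r n := by ring

/-- A posteriori estimate for consecutive approximations from a general
initial point: `‖ξ_{n+1} - ξ_n‖ ≤ ρ_{n+1} + ρ_n - 2 r_n` for all `n`. -/
theorem successive_approximations_consecutive_estimate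
    {X : Type*} [NormedAddCommGroup X] [NormedSpace ℝ X] [CompleteSpace X]
    (x₀ : X) (R : ℝ) (hR : 0 < R) (A : X → X) (k : ℝ → ℝ)
    (hk_cont : ContinuousOn k (Set.Icc 0 R))
    (hk_nonneg : ∀ t ∈ Set.Icc (0 : ℝ) R, 0 ≤ k t)
    (hLip : ∀ x₁ x₂ : X, ∀ r : ℝ, ‖x₁ - x₀‖ ≤ r → ‖x₂ - x₀‖ ≤ r →
      0 < r → r ≤ R → ‖A x₁ - A x₂‖ ≤ k r * ‖x₁ - x₂‖)
    (a : ℝ) (ha : a = ‖A x₀ - x₀‖)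
    (aplus : ℝ → ℝ) (haplus : ∀ r : ℝ, aplus r = a + ∫ t in (0 : ℝ)..r, k t)
    (rstar : ℝ) (hrstar_mem : rstar ∈ Set.Icc (0 : ℝ) R)
    (hrstar_fix : aplus rstar = rstar)
    (hrstar_min : ∀ s ∈ Set.Icc (0 : ℝ) R, aplus s = s → rstar ≤ s)
    (r : ℕ → ℝ) (hr0 : r 0 = 0) (hr_succ : ∀ n : ℕ, r (n + 1) = aplus (r n))
    (ξ : ℕ → X) (hξ0 : ‖ξ 0 - x₀‖ ≤ R) (hξ_succ : ∀ n : ℕ, ξ (n + 1) = A (ξ n))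
    (ρ : ℕ → ℝ) (hρ0 : ρ 0 = ‖ξ 0 - x₀‖) (hρ_succ : ∀ n : ℕ, ρ (n + 1) = aplus (ρ n))
    (hadm : ρ 0 ≤ rstar ∨ ∀ s : ℝ, rstar < s → s ≤ ρ 0 → aplus s < s) :
    ∀ n : ℕ, ‖ξ (n + 1) - ξ n‖ ≤ ρ (n + 1) + ρ n - 2 * r n :=
  successive_approximations_consecutive_estimate_general x₀ R A k hk_cont hk_nonneg hLip a ha aplus
    haplus rstar hrstar_mem hrstar_fix r hr0 hr_succ ξ hξ0 hξ_succ ρ hρ0 hρ_succ hadm
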